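/- arXiv:2312.10910 — 3 statements merged into one kernel-verified Lean document; each statement's English description precedes it below -/
import Mathlib

section
/- For every fixed positive integer k there is a constant C = C(k) such that for all positive integers h, the k-th positive element of the greedy B_h-set satisfies γ_k(h) ≥ h^{k−1}/k! − C·h^{k−2}. -/
/-- A set `A` of nonnegative integers is a `B_h`-set if every solution to
`a_1 + ... + a_h = b_1 + ... + b_h` with all `a_i, b_i ∈ A` has
`{a_1, ..., a_h} = {b_1, ..., b_h}` as multisets. -/
def IsBhSet (h : ℕ) (A : Set ℕ) : Prop :=
  ∀ a b : Fin h → ℕ, (∀ i, a i ∈ A) → (∀ i, b i ∈ A) →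
    (∑ i, a i) = (∑ i, b i) →
    Multiset.map a Finset.univ.val = Multiset.map b Finset.univ.val

/-- Auxiliary construction of the greedy `B_h`-set: `greedyAux h k` is the pair
consisting of the `k`-th element `γ_k(h)` of the greedy `B_h`-set together with
the finite set `{γ_0(h), ..., γ_k(h)}`.  We have `γ_0(h) = 0`, `γ_1(h) = 1`, and
for `k ≥ 1`, `γ_{k+1}(h)` is the smallest integer greater than `γ_k(h)` such
that `{γ_0(h), ..., γ_k(h), γ_{k+1}(h)}` is a `B_h`-set. -/
noncomputable def greedyAux (h : ℕ) : ℕ → ℕ × Finset ℕ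
  | 0 => (0, {0})
  | (k + 1) =>
    let p := greedyAux h k
    let g := if k = 0 then 1
      else sInf {x : ℕ | p.1 < x ∧ IsBhSet h ((insert x p.2 : Finset ℕ) : Set ℕ)}
    (g, insert g p.2)

/-- `greedy h k` is the `k`-th element `γ_k(h)` of the greedy `B_h`-set. -/
noncomputable def greedy (h k : ℕ) : ℕ := (greedyAux h k).1

/-- multiset reformulation of `IsBhSet` -/
lemma isBhSet_iff (h : ℕ) (A : Set ℕ) : IsBhSet h A ↔
    ∀ s t : Multiset ℕ, Multiset.card s = h → Multiset.card t = h →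
      (∀ x ∈ s, x ∈ A) → (∀ x ∈ t, x ∈ A) → s.sum = t.sum → s = t := by
  have key : ∀ s : Multiset ℕ, Multiset.card s = h →
      ∃ a : Fin h → ℕ, Multiset.map a Finset.univ.val = s := by
    intro s hs
    obtain ⟨l, rfl⟩ : ∃ l : List ℕ, s = ↑l := ⟨s.toList, (Multiset.coe_toList s).symm⟩
    simp only [Multiset.coe_card] at hs
    subst hs
    exact ⟨l.get, by simp⟩
  constructor
  · intro H s t hs ht hsA htA hsum
    obtain ⟨a, ha⟩ := key s hs
    obtain ⟨b, hb⟩ := key t ht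
    have := H a b (fun i => hsA _ (by rw [← ha]; exact Multiset.mem_map_of_mem _ (by simp)))
      (fun i => htA _ (by rw [← hb]; exact Multiset.mem_map_of_mem _ (by simp)))
      (by show (Multiset.map a Finset.univ.val).sum = (Multiset.map b Finset.univ.val).sum
          rw [ha, hb, hsum])
    rw [← ha, ← hb, this]
  · intro H a b ha hb hsum
    apply H
    · simp
    · simp
    · intro x hx; obtain ⟨i, _, rfl⟩ := Multiset.mem_map.1 hx; exact ha i
    · intro x hx; obtain ⟨i, _, rfl⟩ := Multiset.mem_map.1 hx; exact hb i
    · simpa [Finset.sum] using hsum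

lemma bh_zero (h : ℕ) : IsBhSet h (({0} : Finset ℕ) : Set ℕ) := by
  rw [isBhSet_iff]
  intro s t hs ht hsA htA _
  have h1 : s = Multiset.replicate h 0 := by
    rw [Multiset.eq_replicate]; exact ⟨hs, fun x hx => by simpa using hsA x hx⟩
  have h2 : t = Multiset.replicate h 0 := by
    rw [Multiset.eq_replicate]; exact ⟨ht, fun x hx => by simpa using htA x hx⟩
  rw [h1, h2]

lemma canon01 (s : Multiset ℕ) (hs : ∀ x ∈ s, x = 0 ∨ x = 1) :
    s = Multiset.replicate (Multiset.card s - s.sum) 0 + Multiset.replicate s.sum 1 := by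
  induction s using Multiset.induction with
  | empty => simp
  | cons a s ih =>
    have hsum : s.sum ≤ Multiset.card s := by
      have := Multiset.sum_le_card_nsmul s 1
        (fun x hx => by rcases hs x (Multiset.mem_cons_of_mem hx) with h | h <;> omega)
      simpa using this
    have ih' := ih (fun x hx => hs x (Multiset.mem_cons_of_mem hx))
    rcases hs a (Multiset.mem_cons_self a s) with rfl | rfl
    · simp only [Multiset.sum_cons, Multiset.card_cons, zero_add]
      have : Multiset.card s + 1 - s.sum = (Multiset.card s - s.sum) + 1 := by omega
      rw [this, Multiset.replicate_succ, Multiset.cons_add]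
      exact congrArg _ ih'
    · simp only [Multiset.sum_cons, Multiset.card_cons]
      have : Multiset.card s + 1 - (1 + s.sum) = Multiset.card s - s.sum := by omega
      rw [this, add_comm 1 s.sum, Multiset.replicate_succ, Multiset.add_cons]
      exact congrArg _ ih'

lemma bh_one (h : ℕ) : IsBhSet h (({0, 1} : Finset ℕ) : Set ℕ) := by
  rw [isBhSet_iff]
  intro s t hs ht hsA htA hsum
  have cs := canon01 s (fun x hx => by simpa using hsA x hx)
  have ct := canon01 t (fun x hx => by simpa using htA x hx)
  rw [cs, ct, hs, ht, hsum]

lemma bh_insert (h : ℕ) (A : Finset ℕ) (h0 : 0 ∈ A) (hA : IsBhSet h (A : Set ℕ))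
    (M : ℕ) (hM : ∀ y ∈ A, y ≤ M) (x : ℕ) (hx : h * M < x) :
    IsBhSet h ((insert x A : Finset ℕ) : Set ℕ) := by
  rw [isBhSet_iff]
  intro s t hs ht hsA htA hsum
  have hxpos : 0 < x := lt_of_le_of_lt (Nat.zero_le _) hx
  have decomp : ∀ u : Multiset ℕ, Multiset.card u = h →
      (∀ y ∈ u, y ∈ ((insert x A : Finset ℕ) : Set ℕ)) →
      ∃ u' : Multiset ℕ, u = Multiset.replicate (u.count x) x + u' ∧ (∀ y ∈ u', y ∈ A) ∧
        Multiset.card u' = h - u.count x ∧ u.count x ≤ h ∧ u'.sum ≤ h * M := by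
    intro u hu huA
    refine ⟨u.filter (¬ · = x), ?_, ?_, ?_, ?_, ?_⟩
    · rw [← Multiset.filter_eq' u x]
      exact (Multiset.filter_add_not (· = x) u).symm
    · intro y hy
      have h1 := Multiset.of_mem_filter hy
      have h2 := huA y (Multiset.mem_of_mem_filter hy)
      simp only [Finset.coe_insert, Set.mem_insert_iff, Finset.mem_coe] at h2
      tauto
    · have := congrArg Multiset.card ((Multiset.filter_add_not (· = x) u)).symm
      rw [hu, Multiset.card_add, Multiset.filter_eq', Multiset.card_replicate] at this
      omega
    · rw [← hu]; exact Multiset.count_le_card x u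
    · calc (u.filter (¬ · = x)).sum ≤ Multiset.card (u.filter (¬ · = x)) • M := by
            apply Multiset.sum_le_card_nsmul
            intro y hy
            have h1 := Multiset.of_mem_filter hy
            have h2 := huA y (Multiset.mem_of_mem_filter hy)
            simp only [Finset.coe_insert, Set.mem_insert_iff, Finset.mem_coe] at h2
            exact hM y (by tauto)
        _ ≤ h * M := by
            have hc : Multiset.card (u.filter (¬ · = x)) ≤ h := by
              rw [← hu]; exact Multiset.card_le_card (Multiset.filter_le _ u)
            simpa [smul_eq_mul] using Nat.mul_le_mul_right M hc
  obtain ⟨s', hsdec, hs'A, hs'card, hscount, hs'sum⟩ := decomp s hs hsA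
  obtain ⟨t', htdec, ht'A, ht'card, htcount, ht'sum⟩ := decomp t ht htA
  set m := s.count x with hm
  set m' := t.count x with hm'
  have hsum' : m * x + s'.sum = m' * x + t'.sum := by
    have e1 : s.sum = m * x + s'.sum := by rw [hsdec]; simp [Multiset.sum_replicate, mul_comm]
    have e2 : t.sum = m' * x + t'.sum := by rw [htdec]; simp [Multiset.sum_replicate, mul_comm]
    rw [← e1, ← e2, hsum]
  have hmm : m = m' := by
    have d1 : (m * x + s'.sum) / x = m := by
      rw [mul_comm, Nat.mul_add_div hxpos, Nat.div_eq_of_lt (lt_of_le_of_lt hs'sum hx)]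
      omega
    have d2 : (m' * x + t'.sum) / x = m' := by
      rw [mul_comm, Nat.mul_add_div hxpos, Nat.div_eq_of_lt (lt_of_le_of_lt ht'sum hx)]
      omega
    rw [← d1, hsum', d2]
  have hsum'' : s'.sum = t'.sum := by
    rw [hmm] at hsum'
    exact Nat.add_left_cancel hsum'
  have key : s' + Multiset.replicate m 0 = t' + Multiset.replicate m 0 := by
    rw [isBhSet_iff] at hA
    apply hA
    · rw [Multiset.card_add, hs'card, Multiset.card_replicate]; omega
    · rw [Multiset.card_add, ht'card, Multiset.card_replicate, ← hmm]; omega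
    · intro y hy
      rcases Multiset.mem_add.1 hy with hy | hy
      · exact hs'A y hy
      · rw [Multiset.eq_of_mem_replicate hy]; exact h0
    · intro y hy
      rcases Multiset.mem_add.1 hy with hy | hy
      · exact ht'A y hy
      · rw [Multiset.eq_of_mem_replicate hy]; exact h0
    · simp [hsum'']
  have hst : s' = t' := add_right_cancel key
  rw [hsdec, htdec, hmm, hst]

lemma greedy_spec (h : ℕ) (k : ℕ) :
    (greedyAux h k).1 ∈ (greedyAux h k).2 ∧ 0 ∈ (greedyAux h k).2 ∧
    (∀ y ∈ (greedyAux h k).2, y ≤ (greedyAux h k).1) ∧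
    (greedyAux h k).2.card = k + 1 ∧ IsBhSet h ((greedyAux h k).2 : Set ℕ) := by
  induction k with
  | zero => exact ⟨by simp [greedyAux], by simp [greedyAux], by simp [greedyAux],
      by simp [greedyAux], bh_zero h⟩
  | succ k ih =>
    obtain ⟨hmem, h0, hmax, hcard, hbh⟩ := ih
    rcases Nat.eq_zero_or_pos k with rfl | hk
    · have e2 : (greedyAux h 1).2 = insert 1 {0} := rfl
      have e1 : (greedyAux h 1).1 = 1 := rfl
      have e01 : (insert 1 ({0} : Finset ℕ)) = {0, 1} := by decide
      refine ⟨?_, ?_, ?_, ?_, ?_⟩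
      · rw [e1, e2]; simp
      · rw [e2]; simp
      · rw [e1, e2]; intro y hy; simp at hy; omega
      · rw [e2, e01]; decide
      · rw [e2, e01]; exact bh_one h
    · set p := greedyAux h k with hp
      set T := {x : ℕ | p.1 < x ∧ IsBhSet h ((insert x p.2 : Finset ℕ) : Set ℕ)} with hT
      have e1 : (greedyAux h (k+1)).1 = sInf T := by
        show (if k = 0 then 1 else sInf T) = sInf T
        rw [if_neg (Nat.pos_iff_ne_zero.1 hk)]
      have e2 : (greedyAux h (k+1)).2 = insert (sInf T) p.2 := by
        show insert (if k = 0 then 1 else sInf T) p.2 = _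
        rw [if_neg (Nat.pos_iff_ne_zero.1 hk)]
      have hTne : T.Nonempty := by
        refine ⟨h * p.1 + p.1 + 1, ?_, ?_⟩
        · omega
        · exact bh_insert h p.2 h0 hbh p.1 hmax _ (by omega)
      have hmemT : sInf T ∈ T := Nat.sInf_mem hTne
      have hgt : p.1 < sInf T := hmemT.1
      have hnotin : sInf T ∉ p.2 := fun hin => absurd (hmax _ hin) (by omega)
      refine ⟨?_, ?_, ?_, ?_, ?_⟩
      · rw [e1, e2]; exact Finset.mem_insert_self _ _
      · rw [e2]; exact Finset.mem_insert_of_mem h0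
      · rw [e1, e2]; intro y hy
        rcases Finset.mem_insert.1 hy with rfl | hy
        · exact le_refl _
        · exact le_of_lt (lt_of_le_of_lt (hmax y hy) hgt)
      · rw [e2, Finset.card_insert_of_notMem hnotin, hcard]
      · rw [e2]; exact hmemT.2

lemma bh_count (h : ℕ) (A : Finset ℕ) (hA : IsBhSet h (A : Set ℕ))
    (M : ℕ) (hM : ∀ y ∈ A, y ≤ M) :
    (A.card + h - 1).choose h ≤ h * M + 1 := by
  rw [isBhSet_iff] at hA
  have hinj : Function.Injective (fun σ : Sym ↥A h =>
      (⟨(σ.toMultiset.map Subtype.val).sum, by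
        have hle : (σ.toMultiset.map Subtype.val).sum ≤
            Multiset.card (σ.toMultiset.map Subtype.val) • M := by
          apply Multiset.sum_le_card_nsmul
          intro y hy
          obtain ⟨z, hz, rfl⟩ := Multiset.mem_map.1 hy
          exact hM z.1 z.2
        rw [Multiset.card_map, Sym.card_coe, smul_eq_mul] at hle
        omega⟩ : Fin (h * M + 1))) := by
    intro σ τ hst
    have hsum : (σ.toMultiset.map Subtype.val).sum = (τ.toMultiset.map Subtype.val).sum := by
      simpa [Fin.ext_iff] using hst
    have := hA (σ.toMultiset.map Subtype.val) (τ.toMultiset.map Subtype.val)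
      (by rw [Multiset.card_map, Sym.card_coe]) (by rw [Multiset.card_map, Sym.card_coe])
      (fun y hy => by obtain ⟨z, hz, rfl⟩ := Multiset.mem_map.1 hy; exact z.2)
      (fun y hy => by obtain ⟨z, hz, rfl⟩ := Multiset.mem_map.1 hy; exact z.2)
      hsum
    have h2 := Multiset.map_injective (Subtype.val_injective) this
    exact Subtype.ext h2
  have hcard := Fintype.card_le_of_injective _ hinj
  rwa [Sym.card_sym_eq_choose, Fintype.card_coe, Fintype.card_fin] at hcard

theorem stmt_4 (k : ℕ) (hk : 1 ≤ k) :
    ∃ C : ℝ, ∀ h : ℕ, 1 ≤ h →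
      (greedy h k : ℝ) ≥ (h : ℝ) ^ (k - 1) / (Nat.factorial k) - C * (h : ℝ) ^ (k - 2) := by
  refine ⟨1, fun h hh => ?_⟩
  obtain ⟨hmem, h0, hmax, hcard, hbh⟩ := greedy_spec h k
  -- counting bound in ℕ
  have hchoose : (k + h).choose h ≤ h * greedy h k + 1 := by
    have := bh_count h (greedyAux h k).2 hbh (greedy h k) hmax
    rw [hcard] at this
    have e : k + 1 + h - 1 = k + h := by omega
    rwa [e] at this
  have hsymm : (k + h).choose h = (k + h).choose k := by
    rw [← Nat.choose_symm (Nat.le_add_right k h)]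
    congr 1
    omega
  have hpow : h ^ k ≤ k.factorial * ((k + h).choose h) := by
    rw [hsymm, ← Nat.descFactorial_eq_factorial_mul_choose, Nat.descFactorial_eq_prod_range]
    calc h ^ k = ∏ _i ∈ Finset.range k, h := by rw [Finset.prod_const, Finset.card_range]
      _ ≤ ∏ i ∈ Finset.range k, (k + h - i) := by
          apply Finset.prod_le_prod' (fun i hi => ?_)
          have := Finset.mem_range.1 hi
          omega
  have hnat : h ^ k ≤ k.factorial * (h * greedy h k + 1) :=
    le_trans hpow (Nat.mul_le_mul_left _ hchoose)
  -- now real arithmetic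
  set x : ℝ := (h : ℝ) with hxdef
  set γ : ℝ := (greedy h k : ℝ) with hγdef
  have hx : (1 : ℝ) ≤ x := by rw [hxdef]; exact_mod_cast hh
  have hγ0 : (0 : ℝ) ≤ γ := by positivity
  have hf : (0 : ℝ) < (k.factorial : ℝ) := by exact_mod_cast k.factorial_pos
  have hcast : x ^ k ≤ (k.factorial : ℝ) * (x * γ + 1) := by rw [hxdef, hγdef]; exact_mod_cast hnat
  have hps : x ^ k = x ^ (k - 1) * x := by
    rw [← pow_succ]
    congr 1
    omega
  have hp2 : (1 : ℝ) ≤ x ^ (k - 2) := one_le_pow₀ hx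
  have key : x ^ (k - 1) * x ≤ (k.factorial : ℝ) * x * γ + k.factorial := by
    rw [← hps]
    calc x ^ k ≤ (k.factorial : ℝ) * (x * γ + 1) := hcast
      _ = (k.factorial : ℝ) * x * γ + k.factorial := by ring
  have h5 : (1 : ℝ) ≤ x ^ (k - 2) * x := by nlinarith
  have h6 : (k.factorial : ℝ) ≤ (k.factorial : ℝ) * (x ^ (k - 2) * x) := by nlinarith
  have h2 : x ^ (k - 1) * x ≤ ((k.factorial : ℝ) * γ + (k.factorial : ℝ) * x ^ (k - 2)) * x := by
    have hc : (k.factorial : ℝ) * x * γ = (k.factorial : ℝ) * γ * x := by ring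
    calc x ^ (k - 1) * x ≤ (k.factorial : ℝ) * x * γ + k.factorial := key
      _ ≤ (k.factorial : ℝ) * γ * x + (k.factorial : ℝ) * (x ^ (k - 2) * x) := by
          rw [hc]; linarith
      _ = ((k.factorial : ℝ) * γ + (k.factorial : ℝ) * x ^ (k - 2)) * x := by ring
  have h3 : x ^ (k - 1) ≤ (k.factorial : ℝ) * γ + (k.factorial : ℝ) * x ^ (k - 2) :=
    le_of_mul_le_mul_right h2 (lt_of_lt_of_le one_pos hx)
  have h4 : x ^ (k - 1) / (k.factorial : ℝ) ≤ γ + x ^ (k - 2) := by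
    rw [div_le_iff₀ hf]
    nlinarith
  rw [ge_iff_le]
  linarith
end

section
/- For every fixed positive integer h there is a constant C = C(h) such that for all positive integers k, the k-th positive element of the greedy B_h-set satisfies γ_k(h) ≥ k^h/(h·h!) − C·k^{h−1}. -/
theorem Multiset.exists_fin_map_eq {α : Type*} {n : ℕ} (m : Multiset α)
    (hm : Multiset.card m = n) : ∃ a : Fin n → α, Finset.univ.val.map a = m := by
  induction m using Quotient.inductionOn with
  | h l =>
    obtain rfl : l.length = n := hm
    exact ⟨fun i => l[i.1], by rw [Fin.univ_val_map, List.ofFn_getElem]; rfl⟩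

theorem isBhSet_iff_injOn_sum {h : ℕ} {A : Set ℕ} :
    IsBhSet h A ↔
      Set.InjOn Multiset.sum {m : Multiset ℕ | Multiset.card m = h ∧ ∀ x ∈ m, x ∈ A} := by
  constructor
  · rintro hB m₁ ⟨hcard₁, hA₁⟩ m₂ ⟨hcard₂, hA₂⟩ hsum
    obtain ⟨a, rfl⟩ := m₁.exists_fin_map_eq hcard₁
    obtain ⟨b, rfl⟩ := m₂.exists_fin_map_eq hcard₂
    exact hB a b (fun i => hA₁ _ (Multiset.mem_map_of_mem _ (Finset.mem_univ_val i)))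
      (fun i => hA₂ _ (Multiset.mem_map_of_mem _ (Finset.mem_univ_val i))) hsum
  · intro hinj a b ha hb hsum
    exact hinj ⟨by simp, by simpa using ha⟩ ⟨by simp, by simpa using hb⟩ hsum

theorem isBhSet_singleton (h c : ℕ) : IsBhSet h {c} := by
  intro a b ha hb _
  obtain rfl : a = b := funext fun i => (ha i).trans (hb i).symm
  rfl

open Multiset in
theorem Multiset.filter_ne_add_replicate_count {α : Type*} [DecidableEq α] (m : Multiset α)
    (x : α) : m.filter (· ≠ x) + replicate (m.count x) x = m := by
  rw [← filter_eq', add_comm, filter_add_not]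

theorem Multiset.sum_eq_sum_filter_ne_add_count_nsmul {α : Type*} [DecidableEq α]
    [AddCommMonoid α] (m : Multiset α) (x : α) :
    m.sum = (m.filter (· ≠ x)).sum + m.count x • x := by
  conv_lhs => rw [← m.filter_ne_add_replicate_count x]
  rw [sum_add, sum_replicate]

theorem Nat.eq_and_eq_of_add_mul_eq {s t c d x : ℕ} (hs : s < x) (ht : t < x)
    (h : s + x * c = t + x * d) : s = t ∧ c = d := by
  have hx : 0 < x := by omega
  obtain ⟨hc, hs'⟩ := (Nat.div_mod_unique hx).2 ⟨rfl, hs⟩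
  obtain ⟨hd, ht'⟩ := (Nat.div_mod_unique hx).2 ⟨rfl, ht⟩
  rw [h] at hc hs'
  exact ⟨hs'.symm.trans ht', hc.symm.trans hd⟩

open Multiset in
theorem IsBhSet.insert_of_mul_lt {h M x : ℕ} {A : Set ℕ} (hB : IsBhSet h A) (h0 : 0 ∈ A)
    (hM : ∀ y ∈ A, y ≤ M) (hx : h * M < x) : IsBhSet h (insert x A) := by
  rw [isBhSet_iff_injOn_sum] at hB ⊢
  have split : ∀ m : Multiset ℕ, card m = h → (∀ y ∈ m, y ∈ insert x A) →
      (card (m.filter (· ≠ x) + replicate (m.count x) 0) = h ∧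
        ∀ y ∈ m.filter (· ≠ x) + replicate (m.count x) 0, y ∈ A) ∧
      (m.filter (· ≠ x)).sum < x ∧ m.sum = (m.filter (· ≠ x)).sum + x * m.count x := by
    intro m hcard hmem
    have hcard' := congrArg card (m.filter_ne_add_replicate_count x)
    have hbelow : ∀ y ∈ m.filter (· ≠ x), y ∈ A := fun y hy =>
      (hmem y (mem_of_mem_filter hy)).resolve_left (of_mem_filter (p := (· ≠ x)) hy)
    refine ⟨⟨by simpa [hcard] using hcard', ?_⟩, ?_, ?_⟩
    · simp only [mem_add, mem_replicate]
      rintro y (hy | ⟨-, rfl⟩)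
      exacts [hbelow y hy, h0]
    · calc (m.filter (· ≠ x)).sum ≤ card (m.filter (· ≠ x)) * M :=
            sum_le_card_nsmul _ _ fun y hy => hM y (hbelow y hy)
        _ ≤ h * M := Nat.mul_le_mul_right _ (hcard ▸ card_le_card (filter_le _ m))
        _ < x := hx
    · rw [m.sum_eq_sum_filter_ne_add_count_nsmul x, smul_eq_mul, mul_comm]
  rintro m₁ ⟨hcard₁, hmem₁⟩ m₂ ⟨hcard₂, hmem₂⟩ hsum
  obtain ⟨hA₁, hlt₁, hsum₁⟩ := split m₁ hcard₁ hmem₁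
  obtain ⟨hA₂, hlt₂, hsum₂⟩ := split m₂ hcard₂ hmem₂
  obtain ⟨hs, hc⟩ := Nat.eq_and_eq_of_add_mul_eq hlt₁ hlt₂ (hsum₁ ▸ hsum₂ ▸ hsum)
  have hpadded := hB hA₁ hA₂ (by simpa using hs)
  rw [hc] at hpadded
  rw [← m₁.filter_ne_add_replicate_count x, ← m₂.filter_ne_add_replicate_count x,
    add_right_cancel hpadded, hc]

theorem IsBhSet.multichoose_card_le {h M : ℕ} {S : Finset ℕ} (hB : IsBhSet h S)
    (hM : ∀ y ∈ S, y ≤ M) : S.card.multichoose h ≤ h * M + 1 := by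
  have hmem (m : Sym S h) : ∀ y ∈ (m : Multiset S).map Subtype.val, y ∈ S := by
    intro y hy
    obtain ⟨z, -, rfl⟩ := Multiset.mem_map.1 hy
    exact z.2
  let sumVal (m : Sym S h) : Fin (h * M + 1) :=
    ⟨((m : Multiset S).map Subtype.val).sum, Nat.lt_succ_of_le <| by
      simpa using Multiset.sum_le_card_nsmul _ M fun y hy => hM y (hmem m y hy)⟩
  have hinj : Function.Injective sumVal := by
    intro m₁ m₂ hsum
    have := isBhSet_iff_injOn_sum.1 hB ⟨by simp, hmem m₁⟩ ⟨by simp, hmem m₂⟩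
      (Fin.val_eq_of_eq hsum)
    exact Sym.coe_injective (Multiset.map_injective Subtype.val_injective this)
  simpa [Sym.card_sym_eq_multichoose] using Fintype.card_le_of_injective sumVal hinj

theorem greedyAux_zero (h : ℕ) : greedyAux h 0 = (0, {0}) := rfl

theorem greedy_zero (h : ℕ) : greedy h 0 = 0 := rfl

theorem greedy_one (h : ℕ) : greedy h 1 = 1 := rfl

theorem greedy_add_two (h k : ℕ) : greedy h (k + 2) =
    sInf {x | greedy h (k + 1) < x ∧ IsBhSet h (insert x (greedyAux h (k + 1)).2 : Finset ℕ)} :=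
  rfl

theorem greedyAux_snd_succ (h k : ℕ) :
    (greedyAux h (k + 1)).2 = insert (greedy h (k + 1)) (greedyAux h k).2 := rfl

theorem greedy_lt_succ_and_isBhSet {h k : ℕ} (h0 : 0 ∈ (greedyAux h k).2)
    (hle : ∀ y ∈ (greedyAux h k).2, y ≤ greedy h k) (hB : IsBhSet h (greedyAux h k).2) :
    greedy h k < greedy h (k + 1) ∧
      IsBhSet h (insert (greedy h (k + 1)) (greedyAux h k).2 : Finset ℕ) := by
  rcases k with _ | k
  · rw [greedy_one, Finset.coe_insert]
    exact ⟨Nat.one_pos, hB.insert_of_mul_lt h0 hle (by simp [greedy_zero])⟩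
  · rw [greedy_add_two]
    let γ := greedy h (k + 1)
    refine Nat.sInf_mem
      (s := {x | γ < x ∧ IsBhSet h (insert x (greedyAux h (k + 1)).2 : Finset ℕ)})
      ⟨(h + 1) * γ + 1, by nlinarith, ?_⟩
    rw [Finset.coe_insert]
    exact hB.insert_of_mul_lt h0 hle (by nlinarith)

theorem greedyAux_spec (h k : ℕ) :
    0 ∈ (greedyAux h k).2 ∧ (∀ y ∈ (greedyAux h k).2, y ≤ greedy h k) ∧
      (greedyAux h k).2.card = k + 1 ∧ IsBhSet h (greedyAux h k).2 := by
  induction k with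
  | zero =>
    simp only [greedyAux_zero, greedy_zero, Finset.coe_singleton]
    exact ⟨Finset.mem_singleton_self 0, by simp, rfl, isBhSet_singleton h 0⟩
  | succ k ih =>
    obtain ⟨h0, hle, hcard, hB⟩ := ih
    obtain ⟨hlt, hB'⟩ := greedy_lt_succ_and_isBhSet h0 hle hB
    rw [greedyAux_snd_succ]
    refine ⟨Finset.mem_insert_of_mem h0, ?_, ?_, hB'⟩
    · simpa using fun y hy => (hle y hy).trans hlt.le
    · rw [Finset.card_insert_of_notMem fun hmem => (hle _ hmem).not_gt hlt, hcard]

theorem stmt_5_general (h : ℕ) :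
    ∃ C : ℝ, ∀ k : ℕ, 1 ≤ k →
      (greedy h k : ℝ) ≥ (k : ℝ) ^ h / (h * Nat.factorial h) - C * (k : ℝ) ^ (h - 1) := by
  refine ⟨1, fun k hk => ?_⟩
  obtain ⟨-, hle, hcard, hB⟩ := greedyAux_spec h k
  have hcount : ((k + h).choose h : ℝ) ≤ h * greedy h k + 1 := by
    have := hB.multichoose_card_le hle
    rw [hcard, Nat.multichoose_eq, Nat.add_right_comm, Nat.add_sub_cancel] at this
    exact_mod_cast this
  have hpow : (k : ℝ) ^ h / h.factorial ≤ (k + h).choose h :=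
    calc (k : ℝ) ^ h / h.factorial ≤ ((k + h + 1 - h : ℕ) : ℝ) ^ h / h.factorial := by
          gcongr; omega
      _ ≤ (k + h).choose h := Nat.pow_le_choose h (k + h)
  have hmain : (k : ℝ) ^ h / (h * h.factorial) ≤ greedy h k + 1 := by
    rcases Nat.eq_zero_or_pos h with rfl | hpos
    · rw [Nat.cast_zero, zero_mul, div_zero]
      positivity
    rw [mul_comm, ← div_div, div_le_iff₀ (by positivity)]
    have : (1 : ℝ) ≤ h := by exact_mod_cast hpos
    nlinarith
  have hk' : (1 : ℝ) ≤ (k : ℝ) ^ (h - 1) := one_le_pow₀ (by exact_mod_cast hk)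
  linarith

theorem stmt_5 (h : ℕ) (hh : 1 ≤ h) :
    ∃ C : ℝ, ∀ k : ℕ, 1 ≤ k →
      (greedy h k : ℝ) ≥ (k : ℝ) ^ h / (h * Nat.factorial h) - C * (k : ℝ) ^ (h - 1) :=
  stmt_5_general h
end

section
/- For every fixed positive integer h there is a constant C = C(h) such that for all positive integers k, the k-th positive element of the greedy B_h-set satisfies γ_k(h) ≤ k^{2h−1}/(h!·(h−1)!) + C·k^{2h−2}. -/
theorem Multiset.exists_fin_map_univ_eq {α : Type*} {n : ℕ} {s : Multiset α}
    (hs : card s = n) : ∃ f : Fin n → α, Finset.univ.val.map f = s := by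
  obtain ⟨l, rfl⟩ : ∃ l : List α, (l : Multiset α) = s := Quotient.exists_rep s
  rw [coe_card] at hs
  subst hs
  exact ⟨fun i => l[(i : ℕ)], by rw [Fin.univ_val_map, List.ofFn_getElem]⟩

open Multiset in
theorem isBhSet_iff_injOn {h : ℕ} {A : Set ℕ} :
    IsBhSet h A ↔ Set.InjOn Multiset.sum {s : Multiset ℕ | card s = h ∧ ∀ x ∈ s, x ∈ A} := by
  constructor
  · rintro hA s ⟨hs, hsA⟩ t ⟨ht, htA⟩ hst
    obtain ⟨f, rfl⟩ := exists_fin_map_univ_eq hs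
    obtain ⟨g, rfl⟩ := exists_fin_map_univ_eq ht
    exact hA f g (fun i => hsA _ (mem_map_of_mem f (Finset.mem_univ_val i)))
      (fun i => htA _ (mem_map_of_mem g (Finset.mem_univ_val i))) hst
  · intro hA f g hf hg hfg
    exact hA ⟨by simp, by simpa using hf⟩ ⟨by simp, by simpa using hg⟩ hfg

open Multiset in
theorem IsBhSet.eq_of_card_eq {h : ℕ} {A : Set ℕ} (hA : IsBhSet h A) (h0 : 0 ∈ A)
    {s t : Multiset ℕ} (hst : card s = card t) (hsh : card s ≤ h)
    (hsA : ∀ x ∈ s, x ∈ A) (htA : ∀ x ∈ t, x ∈ A) (hsum : s.sum = t.sum) : s = t := by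
  have hpad (u : Multiset ℕ) (hu : ∀ x ∈ u, x ∈ A) :
      ∀ x ∈ u + replicate (h - card s) 0, x ∈ A := by
    simp only [mem_add, mem_replicate]
    rintro x (hx | ⟨-, rfl⟩)
    exacts [hu x hx, h0]
  exact add_right_cancel <| isBhSet_iff_injOn.1 hA ⟨by simp; omega, hpad s hsA⟩
    ⟨by simp; omega, hpad t htA⟩ (by simp [hsum])

theorem IsBhSet.mono {h : ℕ} {A B : Set ℕ} (hB : IsBhSet h B) (hAB : A ⊆ B) : IsBhSet h A :=
  fun a b ha hb hab => hB a b (fun i => hAB (ha i)) (fun i => hAB (hb i)) hab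

open Multiset in
theorem exists_rep_of_not_isBhSet_insert {h n : ℕ} {A : Set ℕ} (hA : IsBhSet h A) (h0 : 0 ∈ A)
    (hn : ¬ IsBhSet h (insert n A)) :
    ∃ a b, a < b ∧ b ≤ h ∧ ∃ s t : Multiset ℕ, card s = a ∧ card t = b ∧
      (∀ x ∈ s, x ∈ A) ∧ (∀ x ∈ t, x ∈ A) ∧ (b - a) * n + s.sum = t.sum := by
  simp only [isBhSet_iff_injOn, Set.InjOn, not_forall] at hn
  obtain ⟨s, ⟨hs, hsA⟩, t, ⟨ht, htA⟩, hst, hne⟩ := hn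
  wlog hc : t.count n ≤ s.count n generalizing s t
  · exact this t ht htA s hs hsA hst.symm (Ne.symm hne) (le_of_not_ge hc)
  have split (u : Multiset ℕ) : replicate (u.count n) n + u.filter (· ≠ n) = u := by
    rw [← filter_eq', filter_add_not]
  have rest_mem (u : Multiset ℕ) (hu : ∀ x ∈ u, x ∈ insert n A) :
      ∀ x ∈ u.filter (· ≠ n), x ∈ A := by
    intro x hx
    rw [mem_filter] at hx
    exact (hu x hx.1).resolve_left hx.2
  have card_split (u : Multiset ℕ) : card u = u.count n + card (u.filter (· ≠ n)) := by
    conv_lhs => rw [← split u]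
    simp
  have sum_split (u : Multiset ℕ) : u.sum = u.count n * n + (u.filter (· ≠ n)).sum := by
    conv_lhs => rw [← split u]
    simp
  have hcs := card_split s
  have hct := card_split t
  have hss := sum_split s
  have hts := sum_split t
  have hlt : t.count n < s.count n := by
    refine lt_of_le_of_ne hc fun hc' => hne ?_
    rw [← hc'] at hcs hss
    rw [← split s, ← split t, hc', IsBhSet.eq_of_card_eq hA h0 (by omega) (by omega)
      (rest_mem s hsA) (rest_mem t htA) (by omega)]
  refine ⟨h - s.count n, h - t.count n, by omega, by omega, _, _, by omega, by omega,
    rest_mem s hsA, rest_mem t htA, ?_⟩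
  have : t.count n * n ≤ s.count n * n := Nat.mul_le_mul_right n hc
  rw [show h - t.count n - (h - s.count n) = s.count n - t.count n by omega, Nat.sub_mul]
  omega

open Multiset in
theorem isBhSet_insert_of_lt {h n M : ℕ} {A : Set ℕ} (hA : IsBhSet h A) (h0 : 0 ∈ A)
    (hM : ∀ a ∈ A, a ≤ M) (hn : h * M < n) : IsBhSet h (insert n A) := by
  by_contra hbad
  obtain ⟨a, b, hab, hbh, s, t, -, ht, -, htA, hsum⟩ :=
    exists_rep_of_not_isBhSet_insert hA h0 hbad
  have htM : t.sum ≤ b * M := by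
    simpa [ht] using sum_le_card_nsmul t M fun x hx => hM x (htA x hx)
  have : b * M ≤ h * M := Nat.mul_le_mul_right M hbh
  have : n ≤ (b - a) * n := Nat.le_mul_of_pos_left n (by omega)
  omega

theorem isBhSet_singleton_zero (h : ℕ) : IsBhSet h {0} := by
  intro a b ha hb _
  rw [show a = b from funext fun i => (ha i).trans (hb i).symm]

noncomputable def greedySet (h k : ℕ) : Finset ℕ := (greedyAux h k).2

theorem greedySet_zero (h : ℕ) : greedySet h 0 = {0} := rfl

theorem greedySet_succ (h k : ℕ) :
    greedySet h (k + 1) = insert (greedy h (k + 1)) (greedySet h k) := rfl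

theorem greedy_succ {h k : ℕ} (hk : k ≠ 0) : greedy h (k + 1) =
    sInf {x | greedy h k < x ∧ IsBhSet h ((insert x (greedySet h k) : Finset ℕ) : Set ℕ)} := by
  simp only [greedy, greedyAux, if_neg hk]
  rfl

theorem zero_mem_greedySet (h k : ℕ) : 0 ∈ greedySet h k := by
  induction k with
  | zero => exact Finset.mem_singleton_self 0
  | succ k ih => exact Finset.mem_insert_of_mem ih

theorem greedy_lt_greedy_succ_and_isBhSet {h k : ℕ} (hB : IsBhSet h (greedySet h k : Set ℕ))
    (hM : ∀ a ∈ greedySet h k, a ≤ greedy h k) :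
    greedy h k < greedy h (k + 1) ∧ IsBhSet h (greedySet h (k + 1) : Set ℕ) := by
  rw [greedySet_succ]
  rcases eq_or_ne k 0 with rfl | hk
  · rw [greedy_zero, greedy_one, greedySet_zero]
    refine ⟨Nat.one_pos, ?_⟩
    simpa using
      isBhSet_insert_of_lt (M := 0) (isBhSet_singleton_zero h) rfl (by simp) (by simp)
  · have hS : {x | greedy h k < x ∧
        IsBhSet h ((insert x (greedySet h k) : Finset ℕ) : Set ℕ)}.Nonempty := by
      refine ⟨(h + 1) * greedy h k + 1, by nlinarith, ?_⟩
      rw [Finset.coe_insert]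
      exact isBhSet_insert_of_lt hB (zero_mem_greedySet h k) hM (by nlinarith)
    rw [greedy_succ hk]
    exact Nat.sInf_mem hS

theorem isBhSet_greedySet_and_le_greedy (h k : ℕ) :
    IsBhSet h (greedySet h k : Set ℕ) ∧ ∀ a ∈ greedySet h k, a ≤ greedy h k := by
  induction k with
  | zero =>
    refine ⟨by simpa [greedySet_zero] using isBhSet_singleton_zero h, ?_⟩
    simp [greedySet_zero, greedy_zero]
  | succ k ih =>
    obtain ⟨hlt, hB⟩ := greedy_lt_greedy_succ_and_isBhSet ih.1 ih.2
    refine ⟨hB, fun a ha => ?_⟩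
    rcases Finset.mem_insert.1 ha with rfl | ha
    exacts [le_rfl, (ih.2 a ha).trans hlt.le]

theorem greedy_lt_greedy_succ (h k : ℕ) : greedy h k < greedy h (k + 1) :=
  (greedy_lt_greedy_succ_and_isBhSet (isBhSet_greedySet_and_le_greedy h k).1
    (isBhSet_greedySet_and_le_greedy h k).2).1

theorem card_greedySet (h k : ℕ) : (greedySet h k).card = k + 1 := by
  induction k with
  | zero => rfl
  | succ k ih =>
    rw [greedySet_succ, Finset.card_insert_of_notMem, ih]
    exact fun hmem => ((isBhSet_greedySet_and_le_greedy h k).2 _ hmem).not_gt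
      (greedy_lt_greedy_succ h k)

theorem not_isBhSet_insert_of_lt_greedy_succ {h k n : ℕ} (hk : k ≠ 0) (hkn : greedy h k < n)
    (hn : n < greedy h (k + 1)) :
    ¬ IsBhSet h ((insert n (greedySet h k) : Finset ℕ) : Set ℕ) := fun hB =>
  (Nat.sInf_le (show n ∈ {x | greedy h k < x ∧
    IsBhSet h ((insert x (greedySet h k) : Finset ℕ) : Set ℕ)} from ⟨hkn, hB⟩)).not_gt
    (greedy_succ hk ▸ hn)

theorem not_isBhSet_insert_of_le_greedy {h k n : ℕ} (hn : n ≤ greedy h k)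
    (hnA : n ∉ greedySet h k) :
    ¬ IsBhSet h ((insert n (greedySet h k) : Finset ℕ) : Set ℕ) := by
  induction k with
  | zero => simp_all [greedySet_zero, greedy_zero]
  | succ k ih =>
    rw [greedySet_succ, Finset.mem_insert, not_or] at hnA
    have hnot : ¬ IsBhSet h ((insert n (greedySet h k) : Finset ℕ) : Set ℕ) := by
      rcases le_or_gt n (greedy h k) with hle | hgt
      · exact ih hle hnA.2
      · rcases eq_or_ne k 0 with rfl | hk
        · rw [greedy_one, greedySet_zero] at *
          simp at hnA
          omega
        exact not_isBhSet_insert_of_lt_greedy_succ hk hgt (lt_of_le_of_ne hn hnA.1)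
    refine fun hB => hnot (hB.mono ?_)
    rw [greedySet_succ]
    exact_mod_cast Finset.insert_subset_insert n (Finset.subset_insert _ _)

theorem Finset.card_sym_le {α : Type*} [DecidableEq α] (A : Finset α) (n : ℕ) :
    (A.sym n).card ≤ (A.card + n - 1).choose n := by
  calc (A.sym n).card ≤ (Finset.univ : Finset (Sym A n)).card := by
        refine card_le_card_of_surjOn (Sym.map Subtype.val) fun m hm => ?_
        refine ⟨m.attach.map fun x => ⟨x.1, mem_sym_iff.1 hm x.1 x.2⟩, mem_univ _, ?_⟩
        rw [Sym.map_map]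
        exact m.attach_map_coe
    _ = (A.card + n - 1).choose n := by
        rw [card_univ, Sym.card_sym_eq_choose, Fintype.card_coe]

open Finset

/-- A pair `s ∈ A.sym a`, `t ∈ A.sym b` with `(b - a) * n + Σ s = Σ t` is sent to `n`; other
pairs give junk values of the truncated subtraction and rounding division, which is harmless
since only the size of this set is used. -/
noncomputable def repSet (A : Finset ℕ) (a b : ℕ) : Finset ℕ :=
  (A.sym a ×ˢ A.sym b).image fun st => ((st.2 : Multiset ℕ).sum - (st.1 : Multiset ℕ).sum) / (b - a)

theorem mem_repSet {A : Finset ℕ} {a b n : ℕ} (hab : a < b) {s t : Multiset ℕ}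
    (hs : Multiset.card s = a) (ht : Multiset.card t = b) (hsA : ∀ x ∈ s, x ∈ A)
    (htA : ∀ x ∈ t, x ∈ A) (hst : (b - a) * n + s.sum = t.sum) : n ∈ repSet A a b := by
  refine mem_image.2 ⟨(⟨s, hs⟩, ⟨t, ht⟩), mem_product.2 ⟨mem_sym_iff.2 hsA, mem_sym_iff.2 htA⟩, ?_⟩
  simp only [Sym.coe_mk]
  rw [← hst, Nat.add_sub_cancel, Nat.mul_div_cancel_left _ (by omega)]

theorem card_repSet_le (A : Finset ℕ) (a b : ℕ) :
    (repSet A a b).card ≤ (A.card + a - 1).choose a * (A.card + b - 1).choose b :=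
  card_image_le.trans <| (card_product _ _).trans_le <|
    Nat.mul_le_mul (card_sym_le A a) (card_sym_le A b)

def sizePairs (h : ℕ) : Finset (ℕ × ℕ) :=
  (range (h + 1) ×ˢ range (h + 1)).filter fun p => p.1 < p.2

theorem mem_sizePairs {h : ℕ} {p : ℕ × ℕ} : p ∈ sizePairs h ↔ p.1 < p.2 ∧ p.2 ≤ h := by
  simp only [sizePairs, mem_filter, mem_product, mem_range]
  omega

theorem mem_biUnion_repSet_of_le_greedy {h k n : ℕ} (hh : 1 ≤ h) (hn : n ≤ greedy h k) :
    n ∈ (sizePairs h).biUnion fun p => repSet (greedySet h k) p.1 p.2 := by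
  rw [mem_biUnion]
  by_cases hnA : n ∈ greedySet h k
  · have hzero : ∀ x ∈ Multiset.replicate (h - 1) 0, x ∈ greedySet h k := fun x hx =>
      Multiset.eq_of_mem_replicate hx ▸ zero_mem_greedySet h k
    refine ⟨(h - 1, h), mem_sizePairs.2 ⟨by omega, le_rfl⟩, mem_repSet (by omega)
      (t := n ::ₘ Multiset.replicate (h - 1) 0) (Multiset.card_replicate _ _) (by simp; omega)
      hzero ?_ (by simp [Nat.sub_sub_self hh])⟩
    simpa [hnA] using hzero
  · have hbad := not_isBhSet_insert_of_le_greedy hn hnA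
    rw [coe_insert] at hbad
    obtain ⟨a, b, hab, hbh, s, t, hs, ht, hsA, htA, hst⟩ :=
      exists_rep_of_not_isBhSet_insert (isBhSet_greedySet_and_le_greedy h k).1
        (zero_mem_greedySet h k) hbad
    exact ⟨(a, b), mem_sizePairs.2 ⟨hab, hbh⟩, mem_repSet hab hs ht hsA htA hst⟩

theorem greedy_add_one_le_sum {h : ℕ} (hh : 1 ≤ h) (k : ℕ) :
    greedy h k + 1 ≤ ∑ p ∈ sizePairs h, (k + p.1).choose p.1 * (k + p.2).choose p.2 := by
  calc greedy h k + 1 = (range (greedy h k + 1)).card := (card_range _).symm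
    _ ≤ ((sizePairs h).biUnion fun p => repSet (greedySet h k) p.1 p.2).card :=
        card_le_card fun n hn =>
          mem_biUnion_repSet_of_le_greedy hh (Nat.lt_succ_iff.1 (mem_range.1 hn))
    _ ≤ ∑ p ∈ sizePairs h, (repSet (greedySet h k) p.1 p.2).card := card_biUnion_le
    _ ≤ _ := sum_le_sum fun p _ => by
        simpa [card_greedySet] using card_repSet_le (greedySet h k) p.1 p.2

theorem choose_mul_choose_le_pow {k a b c e : ℕ} (hk : 1 ≤ k) (ha : a ≤ c) (hb : b ≤ c)
    (he : a + b ≤ e) : (k + a).choose a * (k + b).choose b ≤ ((c + 1) * k) ^ e := by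
  have hle {i : ℕ} (hi : i ≤ c) : k + i ≤ (c + 1) * k := by nlinarith
  calc (k + a).choose a * (k + b).choose b ≤ (k + a) ^ a * (k + b) ^ b :=
        Nat.mul_le_mul (Nat.choose_le_pow _ _) (Nat.choose_le_pow _ _)
    _ ≤ ((c + 1) * k) ^ a * ((c + 1) * k) ^ b := by gcongr <;> exact hle ‹_›
    _ = ((c + 1) * k) ^ (a + b) := (pow_add _ _ _).symm
    _ ≤ ((c + 1) * k) ^ e := Nat.pow_le_pow_right (by positivity) he

theorem sum_erase_choose_mul_choose_le {h k : ℕ} (hk : 1 ≤ k) :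
    ∑ p ∈ (sizePairs h).erase (h - 1, h), (k + p.1).choose p.1 * (k + p.2).choose p.2
      ≤ (sizePairs h).card * ((h + 1) * k) ^ (2 * h - 2) := by
  refine (sum_le_card_nsmul _ _ _ fun p hp => ?_).trans
    (Nat.mul_le_mul_right _ (card_erase_le))
  obtain ⟨hne, hp⟩ := mem_erase.1 hp
  rw [mem_sizePairs] at hp
  have : ¬ (p.1 = h - 1 ∧ p.2 = h) := fun ⟨h1, h2⟩ => hne (Prod.ext h1 h2)
  exact choose_mul_choose_le_pow hk (by omega) hp.2 (by omega)

theorem add_pow_le_pow_add_mul_pow {x c : ℝ} (hx : 1 ≤ x) (hc : 0 ≤ c) (n : ℕ) :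
    (x + c) ^ n ≤ x ^ n + (1 + c) ^ n * x ^ (n - 1) := by
  rw [add_pow, add_pow, sum_range_succ, Nat.sub_self, pow_zero, Nat.choose_self, Nat.cast_one,
    mul_one, mul_one, add_comm, sum_mul]
  gcongr
  calc ∑ i ∈ range n, x ^ i * c ^ (n - i) * n.choose i
      ≤ ∑ i ∈ range n, c ^ (n - i) * n.choose i * x ^ (n - 1) := by
        refine sum_le_sum fun i hi => ?_
        rw [show x ^ i * c ^ (n - i) * n.choose i = c ^ (n - i) * n.choose i * x ^ i by ring]
        have : x ^ i ≤ x ^ (n - 1) := pow_le_pow_right₀ hx (by simp at hi; omega)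
        gcongr
    _ ≤ ∑ i ∈ range (n + 1), 1 ^ i * c ^ (n - i) * n.choose i * x ^ (n - 1) := by
        simp only [one_pow, one_mul]
        exact sum_le_sum_of_subset_of_nonneg (range_subset_range.2 n.le_succ)
          fun _ _ _ => by positivity

theorem choose_mul_choose_le_pow_div {h : ℕ} (hh : 1 ≤ h) (k : ℕ) :
    (((k + (h - 1)).choose (h - 1) * (k + h).choose h : ℕ) : ℝ)
      ≤ ((k : ℝ) + h) ^ (2 * h - 1) / (h.factorial * (h - 1).factorial) := by
  have h1 : ((k + (h - 1)).choose (h - 1) : ℝ) ≤ ((k : ℝ) + h) ^ (h - 1) / (h - 1).factorial :=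
    calc ((k + (h - 1)).choose (h - 1) : ℝ) ≤ (k + h).choose (h - 1) := by
          exact_mod_cast Nat.choose_le_choose _ (by omega)
      _ ≤ _ := by exact_mod_cast Nat.choose_le_pow_div (h - 1) (k + h)
  have h2 : ((k + h).choose h : ℝ) ≤ ((k : ℝ) + h) ^ h / h.factorial := by
    exact_mod_cast Nat.choose_le_pow_div h (k + h)
  calc (((k + (h - 1)).choose (h - 1) * (k + h).choose h : ℕ) : ℝ)
      ≤ ((k : ℝ) + h) ^ (h - 1) / (h - 1).factorial * (((k : ℝ) + h) ^ h / h.factorial) := by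
        push_cast
        gcongr
    _ = _ := by
        rw [div_mul_div_comm, ← pow_add, mul_comm ((h - 1).factorial : ℝ),
          show h - 1 + h = 2 * h - 1 by omega]

theorem sum_sizePairs_choose_mul_choose_le {h k : ℕ} (hh : 1 ≤ h) (hk : 1 ≤ k) :
    ((∑ p ∈ sizePairs h, (k + p.1).choose p.1 * (k + p.2).choose p.2 : ℕ) : ℝ)
      ≤ (k : ℝ) ^ (2 * h - 1) / (h.factorial * (h - 1).factorial)
        + (((1 : ℝ) + h) ^ (2 * h - 1) / (h.factorial * (h - 1).factorial)
          + (sizePairs h).card * ((h : ℝ) + 1) ^ (2 * h - 2)) * (k : ℝ) ^ (2 * h - 2) := by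
  set D : ℝ := h.factorial * (h - 1).factorial with hD
  rw [← add_sum_erase _ _ (mem_sizePairs (p := (h - 1, h)).2 ⟨Nat.sub_lt hh one_pos, le_rfl⟩)]
  have hlead := choose_mul_choose_le_pow_div hh k
  rw [← hD] at hlead
  have hrest : ((∑ p ∈ (sizePairs h).erase (h - 1, h),
      (k + p.1).choose p.1 * (k + p.2).choose p.2 : ℕ) : ℝ)
      ≤ (sizePairs h).card * (((h : ℝ) + 1) * k) ^ (2 * h - 2) := by
    exact_mod_cast sum_erase_choose_mul_choose_le hk
  have hpow := add_pow_le_pow_add_mul_pow (x := k) (c := h) (by exact_mod_cast hk)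
    h.cast_nonneg (2 * h - 1)
  rw [show 2 * h - 1 - 1 = 2 * h - 2 by omega] at hpow
  calc _ ≤ ((k : ℝ) + h) ^ (2 * h - 1) / D + (sizePairs h).card * ((h + 1) * k) ^ (2 * h - 2) := by
        push_cast at hlead hrest ⊢
        linarith
    _ ≤ ((k : ℝ) ^ (2 * h - 1) + (1 + h) ^ (2 * h - 1) * k ^ (2 * h - 2)) / D
        + (sizePairs h).card * ((h + 1) * k) ^ (2 * h - 2) := by gcongr
    _ = _ := by rw [mul_pow]; ring

theorem stmt_9 (h : ℕ) (hh : 1 ≤ h) :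
    ∃ C : ℝ, ∀ k : ℕ, 1 ≤ k →
      (greedy h k : ℝ) ≤ (k : ℝ) ^ (2 * h - 1) / (Nat.factorial h * Nat.factorial (h - 1))
        + C * (k : ℝ) ^ (2 * h - 2) := by
  refine ⟨_, fun k hk => le_trans ?_ (sum_sizePairs_choose_mul_choose_le hh hk)⟩
  exact_mod_cast (Nat.le_succ _).trans (greedy_add_one_le_sum hh k)
end
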